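/- Let β̂₁ = √μ_s(3√μ/2 + L), β̂₂ = (3/2)√μ·√μ_s, β̂₃ = 13√μ/16, β̂₄ = (4μ²√s + 3L√μ·√μ_s)/(8L²), β̂₅ = √μ_s(5√μL/2 − μ^{3/2}/2), and for a fixed α ∈ (0,1) let a*₂ = α·min{(−β̂₁ + √(β̂₁² + 4β̂₅β̂₃))/(2β̂₅), β̂₄/β̂₂}. Then for every a with 0 ≤ a ≤ a*₂ one has aβ̂₁ + a²β̂₅ − β̂₃ < 0 and aβ̂₂ − β̂₄ < 0, and consequently C_ST(p̂;a) < 0 for every p̂ = (x̂,v̂) with (v̂, ∇f(x̂)) ≠ (0,0), i.e. for every p̂ ≠ (x*, 0). -/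
import Mathlib


open scoped RealInnerProductSpace

noncomputable section

variable {n : ℕ}

local notation "E" => EuclideanSpace ℝ (Fin n)

/-- √μ_s := 1 + √(μs) -/
def ms (μ s : ℝ) : ℝ := 1 + Real.sqrt (μ * s)

def CST (μ L s : ℝ) (f : E → ℝ) (f' : E → E) (a : ℝ) (x v : E) : ℝ :=
  -(13 * Real.sqrt μ / 16) * ‖v‖ ^ 2 - μ ^ 2 * Real.sqrt s / (2 * L ^ 2) * ‖f' x‖ ^ 2
    + ms μ s * (-(3 * Real.sqrt μ / (8 * L)) * ‖f' x‖ ^ 2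
        + Real.sqrt μ * (f x - f (x + a • v))
        + Real.sqrt μ * ‖f' x‖ * ‖a • v‖
        - μ * Real.sqrt μ / 2 * ‖a • v‖ ^ 2
        - ⟪f' (x + a • v) - f' x, v⟫
        + Real.sqrt μ * ⟪f' (x + a • v), a • v⟫)

def betah1 (μ L s : ℝ) : ℝ := ms μ s * (3 * Real.sqrt μ / 2 + L)
def betah2 (μ s : ℝ) : ℝ := 3 / 2 * Real.sqrt μ * ms μ s
def betah3 (μ : ℝ) : ℝ := 13 * Real.sqrt μ / 16
def betah4 (μ L s : ℝ) : ℝ :=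
  (4 * μ ^ 2 * Real.sqrt s + 3 * L * Real.sqrt μ * ms μ s) / (8 * L ^ 2)
def betah5 (μ L s : ℝ) : ℝ :=
  ms μ s * (5 * Real.sqrt μ * L / 2 - μ * Real.sqrt μ / 2)

/-- a*₂ = α·min{(−β̂₁ + √(β̂₁² + 4β̂₅β̂₃))/(2β̂₅), β̂₄/β̂₂}. -/
def astar2 (μ L s α : ℝ) : ℝ :=
  α * min ((-betah1 μ L s + Real.sqrt (betah1 μ L s ^ 2
      + 4 * betah5 μ L s * betah3 μ)) / (2 * betah5 μ L s))
    (betah4 μ L s / betah2 μ s)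

set_option maxHeartbeats 4000000 in
/-- for 0 ≤ a ≤ a*₂ the coefficients aβ̂₁ + a²β̂₅ − β̂₃ and
aβ̂₂ − β̂₄ are negative, and consequently C_ST(p̂;a) < 0 for p̂ ≠ (x*,0). -/
theorem stmt_10 {n : ℕ} (μ L s : ℝ) (hμ : 0 < μ) (hμL : μ ≤ L) (hs : 0 < s)
    (f : EuclideanSpace ℝ (Fin n) → ℝ)
    (f' : EuclideanSpace ℝ (Fin n) → EuclideanSpace ℝ (Fin n))
    (hgrad : ∀ x, HasGradientAt f (f' x) x)
    (hconv : ∀ x y, f y - f x ≥ ⟪f' x, y - x⟫ + μ / 2 * ‖y - x‖ ^ 2)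
    (hlip : ∀ x y, ‖f' x - f' y‖ ≤ L * ‖x - y‖)
    (xs : EuclideanSpace ℝ (Fin n)) (hmin : ∀ x, f xs ≤ f x) (hgs : f' xs = 0)
    (hiff : ∀ x, f' x = 0 ↔ x = xs)
    (α : ℝ) (hα : α ∈ Set.Ioo (0:ℝ) 1)
    (a : ℝ) (ha : 0 ≤ a) (ha2 : a ≤ astar2 μ L s α) :
    a * betah1 μ L s + a ^ 2 * betah5 μ L s - betah3 μ < 0 ∧
    a * betah2 μ s - betah4 μ L s < 0 ∧
    ∀ x v : EuclideanSpace ℝ (Fin n), ¬(x = xs ∧ v = 0) →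
      CST μ L s f f' a x v < 0 := by
  obtain ⟨hα0, hα1⟩ := hα
  have hL : (0:ℝ) < L := lt_of_lt_of_le hμ hμL
  have hrμ : (0:ℝ) < Real.sqrt μ := Real.sqrt_pos.2 hμ
  have hrs : (0:ℝ) < Real.sqrt s := Real.sqrt_pos.2 hs
  have hm : (0:ℝ) < ms μ s := by
    have := Real.sqrt_nonneg (μ * s); unfold ms; linarith
  have hB1 : (0:ℝ) < betah1 μ L s := by
    unfold betah1; nlinarith
  have hB2 : (0:ℝ) < betah2 μ s := by
    unfold betah2; nlinarith
  have hB3 : (0:ℝ) < betah3 μ := by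
    unfold betah3; nlinarith
  have hB4 : (0:ℝ) < betah4 μ L s := by
    unfold betah4; positivity
  have hB5 : (0:ℝ) < betah5 μ L s := by
    unfold betah5
    have h5 : 0 < 5 * Real.sqrt μ * L / 2 - μ * Real.sqrt μ / 2 := by
      nlinarith [mul_pos hrμ hμ, mul_le_mul_of_nonneg_left hμL hrμ.le,
        mul_pos hrμ hL]
    exact mul_pos hm h5
  unfold astar2 at ha2
  set B1 := betah1 μ L s with hB1d
  set B2 := betah2 μ s with hB2d
  set B3 := betah3 μ with hB3d
  set B4 := betah4 μ L s with hB4d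
  set B5 := betah5 μ L s with hB5d
  have hB1e : B1 = ms μ s * (3 * Real.sqrt μ / 2 + L) := rfl
  have hB2e : B2 = 3 / 2 * Real.sqrt μ * ms μ s := rfl
  have hB3e : B3 = 13 * Real.sqrt μ / 16 := rfl
  have hB5e : B5 = ms μ s * (5 * Real.sqrt μ * L / 2 - μ * Real.sqrt μ / 2) := rfl
  have hB4e : B4 = μ ^ 2 * Real.sqrt s / (2 * L ^ 2)
      + 3 * Real.sqrt μ * ms μ s / (8 * L) := by
    rw [hB4d]; unfold betah4; field_simp; ring
  set D := B1 ^ 2 + 4 * B5 * B3 with hDd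
  have hD0 : (0:ℝ) ≤ D := by nlinarith
  have hsD : B1 < Real.sqrt D := by
    rw [show B1 = Real.sqrt (B1 ^ 2) by rw [Real.sqrt_sq hB1.le]]
    apply Real.sqrt_lt_sqrt (by positivity)
    nlinarith
  have hsDsq : Real.sqrt D ^ 2 = D := Real.sq_sqrt hD0
  set r := (-B1 + Real.sqrt D) / (2 * B5) with hrd
  have hr0 : 0 < r := div_pos (by linarith) (by linarith)
  have hroot : B5 * r ^ 2 + B1 * r - B3 = 0 := by
    have h2 : r * (2 * B5) = Real.sqrt D - B1 := by
      rw [hrd]; field_simp; ring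
    have hu2 : Real.sqrt D ^ 2 = B1 ^ 2 + 4 * B5 * B3 := by rw [hsDsq]
    have h3 : 4 * B5 * (B5 * r ^ 2 + B1 * r - B3) = 0 := by
      linear_combination (2 * B5 * r + B1 + Real.sqrt D) * h2 + hu2
    have h4B5 : (4 * B5) ≠ 0 := by positivity
    exact (mul_eq_zero.mp h3).resolve_left h4B5
  set q := B4 / B2 with hqd
  have hq0 : 0 < q := div_pos hB4 hB2
  have har : a < r := by
    have h1 : α * min r q ≤ α * r :=
      mul_le_mul_of_nonneg_left (min_le_left r q) hα0.le
    nlinarith [mul_pos (show (0:ℝ) < 1 - α by linarith) hr0]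
  have haq : a < q := by
    have h1 : α * min r q ≤ α * q :=
      mul_le_mul_of_nonneg_left (min_le_right r q) hα0.le
    nlinarith [mul_pos (show (0:ℝ) < 1 - α by linarith) hq0]
  have hcoef1 : a * B1 + a ^ 2 * B5 - B3 < 0 := by
    have hfact : 0 < (r - a) * (B5 * (r + a) + B1) := by
      apply mul_pos (by linarith)
      nlinarith [mul_pos hB5 hr0, mul_nonneg hB5.le ha]
    nlinarith [hfact, hroot]
  have hcoef2 : a * B2 - B4 < 0 := by
    have h1 : a * B2 < q * B2 := by nlinarith
    rw [hqd, div_mul_cancel₀ _ hB2.ne'] at h1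
    linarith
  refine ⟨hcoef1, hcoef2, ?_⟩
  intro x v hxv
  set g := ‖f' x‖ with hgd
  set w := ‖v‖ with hwd
  have hg0 : 0 ≤ g := norm_nonneg _
  have hw0 : 0 ≤ w := norm_nonneg _
  have hav : ‖a • v‖ = a * w := by
    rw [norm_smul, Real.norm_eq_abs, abs_of_nonneg ha, hwd]
  have hsub : x + a • v - x = a • v := add_sub_cancel_left x (a • v)
  have h1 : f x - f (x + a • v) ≤ a * (g * w) - μ / 2 * (a * w) ^ 2 := by
    have hc := hconv x (x + a • v)
    rw [hsub, hav] at hc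
    have hcs := (abs_le.1 (abs_real_inner_le_norm (f' x) (a • v))).1
    rw [hav, ← hgd] at hcs
    linarith [hcs, hc]
  have hd : ‖f' (x + a • v) - f' x‖ ≤ L * (a * w) := by
    have := hlip (x + a • v) x
    rwa [hsub, hav] at this
  have h2 : -⟪f' (x + a • v) - f' x, v⟫ ≤ L * (a * w) * w := by
    have hcs := (abs_le.1 (abs_real_inner_le_norm (f' (x + a • v) - f' x) v)).1
    rw [← hwd] at hcs
    have := mul_le_mul_of_nonneg_right hd hw0
    linarith [hcs, this]
  have h3 : ⟪f' (x + a • v), a • v⟫ ≤ (g + L * (a * w)) * (a * w) := by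
    have hcs := (abs_le.1 (abs_real_inner_le_norm (f' (x + a • v)) (a • v))).2
    rw [hav] at hcs
    have htri : ‖f' (x + a • v)‖ ≤ g + L * (a * w) := by
      have := norm_sub_norm_le (f' (x + a • v)) (f' x)
      rw [← hgd] at this
      linarith
    have := mul_le_mul_of_nonneg_right htri (mul_nonneg ha hw0)
    linarith [hcs, this]
  have h4 : g * w ≤ (g ^ 2 + w ^ 2) / 2 := by linarith [sq_nonneg (g - w)]
  -- bound on the bracket
  have hTb : -(3 * Real.sqrt μ / (8 * L)) * g ^ 2
        + Real.sqrt μ * (f x - f (x + a • v))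
        + Real.sqrt μ * g * (a * w)
        - μ * Real.sqrt μ / 2 * (a * w) ^ 2
        - ⟪f' (x + a • v) - f' x, v⟫
        + Real.sqrt μ * ⟪f' (x + a • v), a • v⟫
      ≤ -(3 * Real.sqrt μ / (8 * L)) * g ^ 2 + 3 * Real.sqrt μ * a * (g * w)
        + L * a * w ^ 2 + a ^ 2 * Real.sqrt μ * (L - μ) * w ^ 2 := by
    linarith [mul_le_mul_of_nonneg_left h1 hrμ.le, h2,
      mul_le_mul_of_nonneg_left h3 hrμ.le]
  have hmT := mul_le_mul_of_nonneg_left hTb hm.le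
  have hgw : 3 * Real.sqrt μ * a * ms μ s * (g * w)
      ≤ 3 * Real.sqrt μ * a * ms μ s * ((g ^ 2 + w ^ 2) / 2) := by
    apply mul_le_mul_of_nonneg_left h4
    positivity
  have hq5 : a ^ 2 * (ms μ s * (Real.sqrt μ * (L - μ))) * w ^ 2
      ≤ a ^ 2 * (ms μ s * (5 * Real.sqrt μ * L / 2 - μ * Real.sqrt μ / 2)) * w ^ 2 := by
    have h5 : ms μ s * (Real.sqrt μ * (L - μ))
        ≤ ms μ s * (5 * Real.sqrt μ * L / 2 - μ * Real.sqrt μ / 2) := by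
      apply mul_le_mul_of_nonneg_left _ hm.le
      linarith [mul_pos hrμ hL, mul_pos hrμ hμ]
    have := mul_le_mul_of_nonneg_right
      (mul_le_mul_of_nonneg_left h5 (sq_nonneg a)) (sq_nonneg w)
    linarith
  have hkey : CST μ L s f f' a x v
      ≤ (a * B2 - B4) * g ^ 2 + (a * B1 + a ^ 2 * B5 - B3) * w ^ 2 := by
    unfold CST
    rw [hav, ← hgd, ← hwd, hB1e, hB2e, hB3e, hB4e, hB5e]
    ring_nf at hmT hgw hq5 ⊢
    linarith [hmT, hgw, hq5]
  have hgw0 : 0 < g ^ 2 + w ^ 2 := by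
    rcases eq_or_ne (f' x) 0 with hfx | hfx
    · have hx : x = xs := (hiff x).1 hfx
      have hv : v ≠ 0 := fun hv => hxv ⟨hx, hv⟩
      have hwp : 0 < w := by rw [hwd]; exact norm_pos_iff.2 hv
      exact add_pos_of_nonneg_of_pos (sq_nonneg g) (pow_pos hwp 2)
    · have hgp : 0 < g := by rw [hgd]; exact norm_pos_iff.2 hfx
      exact add_pos_of_pos_of_nonneg (pow_pos hgp 2) (sq_nonneg w)
  have hfin : (a * B2 - B4) * g ^ 2 + (a * B1 + a ^ 2 * B5 - B3) * w ^ 2 < 0 := by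
    rcases lt_or_ge 0 g with hg | hg
    · have t1 : (a * B2 - B4) * g ^ 2 < 0 :=
        mul_neg_of_neg_of_pos hcoef2 (pow_pos hg 2)
      have t2 : (a * B1 + a ^ 2 * B5 - B3) * w ^ 2 ≤ 0 :=
        mul_nonpos_iff.mpr (Or.inr ⟨hcoef1.le, sq_nonneg w⟩)
      linarith
    · have hge : g = 0 := le_antisymm hg hg0
      have hwpos : 0 < w := by
        rcases lt_or_ge 0 w with h | h
        · exact h
        · exfalso; have : w = 0 := le_antisymm h hw0
          rw [hge, this] at hgw0; norm_num at hgw0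
      have t2 : (a * B1 + a ^ 2 * B5 - B3) * w ^ 2 < 0 :=
        mul_neg_of_neg_of_pos hcoef1 (pow_pos hwpos 2)
      have t1 : (a * B2 - B4) * g ^ 2 = 0 := by rw [hge]; ring
      linarith
  linarith

end
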